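/- Suppose the area asymptotics A(Σ_z) = πL²(1 − L²R(q)/72 + o(L²)) and A(Σ̂_z) = πL²(1 − L²R̂(q̂)/72 + o(L²)) hold, and the identity d = A(Σ) + A(Σ̂) − 2∫Φ dμ with ∫Φ dμ = A(Σ̂) (vanishing average fluctuation). Then R̂(q̂) = R(q) + (72/π)·d/L⁴ + o(1) as L → 0. -/
import Mathlib

open Asymptotics Filter Real

/-- Given the small-`L` area asymptotics
`A(Σ_L) = π L² (1 - L² R/72) + o(L⁴)` and `A(Σ̂_L) = π L² (1 - L² R̂/72) + o(L⁴)`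
(as `L → 0⁺`), together with the identity `d = A(Σ) + A(Σ̂) - 2∫Φ` and the vanishing
average fluctuation `∫Φ = A(Σ̂)` (so `d = A(Σ) - A(Σ̂)`), one gets
`(π/72) L⁴ (R̂ - R) = d + o(L⁴)`, i.e. `R̂ = R + (72/π) d / L⁴ + o(1)`. -/
theorem stmt17 (AS Ahat d intPhi : ℝ → ℝ) (R Rhat : ℝ)
    (h1 : (fun L => AS L - π * L ^ 2 * (1 - L ^ 2 * R / 72))
            =o[nhdsWithin 0 (Set.Ioi 0)] fun L => L ^ 4)
    (h2 : (fun L => Ahat L - π * L ^ 2 * (1 - L ^ 2 * Rhat / 72))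
            =o[nhdsWithin 0 (Set.Ioi 0)] fun L => L ^ 4)
    (h3 : ∀ L, d L = AS L + Ahat L - 2 * intPhi L)
    (h4 : ∀ L, intPhi L = Ahat L) :
    (fun L => (π / 72) * L ^ 4 * (Rhat - R) - d L)
      =o[nhdsWithin 0 (Set.Ioi 0)] fun L => L ^ 4 := by
  have := h2.sub h1
  apply this.congr' _ (by rfl)
  filter_upwards with L
  have hd : d L = AS L - Ahat L := by rw [h3, h4]; ring
  rw [hd]; ring
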